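/- Suppose γ > 1, Σ_XΣ_Xᵀ is positive definite, and Λ₁ᵀΛ₁ is positive definite (so that Z₀ = ((1−γ)/γ²)Λ₁ᵀΛ₁ is negative definite). Then for every T > 0 the Hermitian matrix Riccati differential equation Γ₂'(τ) = Γ₂(τ)Z₂Γ₂(τ) + Z₁ᵀΓ₂(τ) + Γ₂(τ)Z₁ + Z₀ with initial condition Γ₂(0) = 0 has a unique solution Γ₂ : [0,T] → ℝ^{2×2} (no finite-time blow-up), and Γ₂(τ) is symmetric and negative definite for every τ ∈ (0,T]. (This is the global-existence part of Proposition 4 of the paper.) -/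

import Mathlib

/-!
Radon's lemma: let `(X, Y)` be the fundamental solution of the linear Hamiltonian system
`X' = -BX - AY`, `Y' = CX + BᵀY`, `X(0) = 1`, `Y(0) = 0`, obtained from a matrix exponential.
Wherever `X` is invertible, `Γ = YX⁻¹` solves `Γ' = ΓAΓ + BᵀΓ + ΓB + C`.
The matrix `W = XᵀY` stays symmetric and satisfies `W' = XᵀCX - YᵀAY ≤ 0` with `W'(0) = C < 0`,
so `W(t)` is negative definite for `t > 0`. Hence `X(t)` never becomes singular (no blow-up),
and `Γ = X⁻ᵀWX⁻¹` is negative definite. Uniqueness holds because the right-hand side is smooth.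
-/

open Matrix

noncomputable section

namespace Stmt3

/-- `Z₂ = Σ_XΣ_Xᵀ`. -/
def Z₂ (SX : Matrix (Fin 2) (Fin 4) ℝ) : Matrix (Fin 2) (Fin 2) ℝ := SX * SXᵀ

/-- `Z₁ = ((1−γ)/γ)Σ_XΛ₁ − K_X`. -/
def Z₁ (γ : ℝ) (KX : Matrix (Fin 2) (Fin 2) ℝ) (SX : Matrix (Fin 2) (Fin 4) ℝ)
    (Λ₁ : Matrix (Fin 4) (Fin 2) ℝ) : Matrix (Fin 2) (Fin 2) ℝ :=
  ((1 - γ) / γ) • (SX * Λ₁) - KX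

/-- `Z₀ = ((1−γ)/γ²)Λ₁ᵀΛ₁`. -/
def Z₀ (γ : ℝ) (Λ₁ : Matrix (Fin 4) (Fin 2) ℝ) : Matrix (Fin 2) (Fin 2) ℝ :=
  ((1 - γ) / γ ^ 2) • (Λ₁ᵀ * Λ₁)

end Stmt3

open Set

theorem ODE_solution_unique_Icc_of_contDiff {E : Type*} [NormedAddCommGroup E]
    [NormedSpace ℝ E] [FiniteDimensional ℝ E] {v : E → E} (hv : ContDiff ℝ 1 v)
    {f g : ℝ → E} {a b : ℝ}
    (hf : ∀ t ∈ Icc a b, HasDerivWithinAt f (v (f t)) (Icc a b) t)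
    (hg : ∀ t ∈ Icc a b, HasDerivWithinAt g (v (g t)) (Icc a b) t) (ha : f a = g a) :
    EqOn f g (Icc a b) := by
  have hfc : ContinuousOn f (Icc a b) := fun t ht => (hf t ht).continuousWithinAt
  have hgc : ContinuousOn g (Icc a b) := fun t ht => (hg t ht).continuousWithinAt
  obtain ⟨Rf, hRf⟩ := isCompact_Icc.exists_bound_of_continuousOn hfc
  obtain ⟨Rg, hRg⟩ := isCompact_Icc.exists_bound_of_continuousOn hgc
  obtain ⟨K, hK⟩ := hv.contDiffOn.exists_lipschitzOnWith one_ne_zero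
    (convex_closedBall 0 (max Rf Rg)) (isCompact_closedBall 0 (max Rf Rg))
  refine ODE_solution_unique_of_mem_Icc_right (fun _ _ => hK) hfc
    (fun t ht => (hf t (Ico_subset_Icc_self ht)).mono_of_mem_nhdsWithin
      (Icc_mem_nhdsGE_of_mem ht))
    (fun t ht => mem_closedBall_zero_iff.2 ((hRf t (Ico_subset_Icc_self ht)).trans
      (le_max_left _ _))) hgc
    (fun t ht => (hg t (Ico_subset_Icc_self ht)).mono_of_mem_nhdsWithin
      (Icc_mem_nhdsGE_of_mem ht))
    (fun t ht => mem_closedBall_zero_iff.2 ((hRg t (Ico_subset_Icc_self ht)).trans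
      (le_max_right _ _))) ha

theorem lt_of_antitoneOn_of_hasDerivWithinAt_neg {g : ℝ → ℝ} {a b d : ℝ}
    (hg : AntitoneOn g (Icc a b)) (hd : HasDerivWithinAt g d (Icc a b) a) (hd₀ : d < 0)
    (hab : a < b) : g b < g a := by
  refine (hg ⟨le_rfl, hab.le⟩ ⟨hab.le, le_rfl⟩ hab.le).lt_of_ne fun hba => hd₀.ne ?_
  have hconst : EqOn g (fun _ => g a) (Icc a b) := fun s hs =>
    le_antisymm (hg ⟨le_rfl, hab.le⟩ hs hs.1) (hba ▸ hg hs ⟨hab.le, le_rfl⟩ hs.2)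
  exact (uniqueDiffOn_Icc hab a ⟨le_rfl, hab.le⟩).eq_deriv _ hd
    ((hasDerivWithinAt_const a _ (g a)).congr hconst rfl)

section MatrixDeriv

variable {𝕜 : Type*} [NontriviallyNormedField 𝕜] {m n : Type*} [Fintype n]

theorem Matrix.hasDerivAt_iff {R : Type*} [NormedAddCommGroup R] [NormedSpace 𝕜 R]
    {f : 𝕜 → Matrix m n R} {f' : Matrix m n R} {t : 𝕜} :
    HasDerivAt f f' t ↔ ∀ i j, HasDerivAt (fun τ => f τ i j) (f' i j) t :=
  hasDerivAt_pi.trans (forall_congr' fun _ => hasDerivAt_pi)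

theorem Matrix.hasDerivWithinAt_iff {R : Type*} [NormedAddCommGroup R] [NormedSpace 𝕜 R]
    {f : 𝕜 → Matrix m n R} {f' : Matrix m n R} {s : Set 𝕜} {t : 𝕜} :
    HasDerivWithinAt f f' s t ↔ ∀ i j, HasDerivWithinAt (fun τ => f τ i j) (f' i j) s t :=
  hasDerivWithinAt_pi.trans (forall_congr' fun _ => hasDerivWithinAt_pi)

variable [Fintype m]

theorem HasDerivAt.matrix_transpose {R : Type*} [NormedAddCommGroup R] [NormedSpace 𝕜 R]
    {f : 𝕜 → Matrix m n R} {f' : Matrix m n R} {t : 𝕜} (hf : HasDerivAt f f' t) :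
    HasDerivAt (fun τ => (f τ)ᵀ) f'ᵀ t :=
  Matrix.hasDerivAt_iff.mpr fun i j => Matrix.hasDerivAt_iff.mp hf j i

theorem HasDerivAt.dotProduct_mulVec {f : 𝕜 → Matrix m n 𝕜} {f' : Matrix m n 𝕜} {t : 𝕜}
    (hf : HasDerivAt f f' t) (v : m → 𝕜) (w : n → 𝕜) :
    HasDerivAt (fun τ => v ⬝ᵥ (f τ *ᵥ w)) (v ⬝ᵥ (f' *ᵥ w)) t := by
  simp only [dotProduct, mulVec, Finset.mul_sum]
  exact HasDerivAt.fun_sum fun i _ => HasDerivAt.fun_sum fun j _ =>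
    ((Matrix.hasDerivAt_iff.mp hf i j).mul_const (w j)).const_mul (v i)

end MatrixDeriv

section LinftyOpNorm

attribute [local instance] Matrix.linftyOpNormedAddCommGroup Matrix.linftyOpNormedSpace
  Matrix.linftyOpNormedRing Matrix.linftyOpNormedAlgebra

theorem HasDerivAt.matrix_inv {n : Type*} [Fintype n] [DecidableEq n] {f : ℝ → Matrix n n ℝ}
    {f' : Matrix n n ℝ} {t : ℝ}
    (hf : HasDerivAt f f' t) (hdet : IsUnit (f t).det) :
    HasDerivAt (fun τ => (f τ)⁻¹) (-((f t)⁻¹ * f' * (f t)⁻¹)) t := by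
  obtain ⟨u, hu⟩ := (isUnit_iff_isUnit_det _).mpr hdet
  have hinv' : HasFDerivAt Ring.inverse
      (-ContinuousLinearMap.mulLeftRight ℝ _ ↑u⁻¹ ↑u⁻¹) (f t) := hu ▸ hasFDerivAt_ringInverse u
  have h := hinv'.comp_hasDerivAt t hf
  have hinv : ((u⁻¹ : (Matrix n n ℝ)ˣ) : Matrix n n ℝ) = (f t)⁻¹ := by rw [coe_units_inv, hu]
  simp only [Function.comp_def, ← nonsing_inv_eq_ringInverse, hinv] at h
  exact h

namespace Riccati

variable {n : Type*} [Fintype n] (A B C : Matrix n n ℝ)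

def rhs (P : Matrix n n ℝ) : Matrix n n ℝ := P * A * P + Bᵀ * P + P * B + C

def hamiltonian : Matrix (n ⊕ n) (n ⊕ n) ℝ := fromBlocks (-B) (-A) C Bᵀ

theorem toBlocks₁₁_hamiltonian_mul (M : Matrix (n ⊕ n) (n ⊕ n) ℝ) :
    (hamiltonian A B C * M).toBlocks₁₁ = -(B * M.toBlocks₁₁) - A * M.toBlocks₂₁ := by
  conv_lhs => rw [← fromBlocks_toBlocks M, hamiltonian, fromBlocks_multiply]
  simp [sub_eq_add_neg]

theorem toBlocks₂₁_hamiltonian_mul (M : Matrix (n ⊕ n) (n ⊕ n) ℝ) :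
    (hamiltonian A B C * M).toBlocks₂₁ = C * M.toBlocks₁₁ + Bᵀ * M.toBlocks₂₁ := by
  conv_lhs => rw [← fromBlocks_toBlocks M, hamiltonian, fromBlocks_multiply]
  simp

variable [DecidableEq n]

def X (t : ℝ) : Matrix n n ℝ := (NormedSpace.exp (t • hamiltonian A B C)).toBlocks₁₁

def Y (t : ℝ) : Matrix n n ℝ := (NormedSpace.exp (t • hamiltonian A B C)).toBlocks₂₁

def W (t : ℝ) : Matrix n n ℝ := (X A B C t)ᵀ * Y A B C t

def solution (t : ℝ) : Matrix n n ℝ := Y A B C t * (X A B C t)⁻¹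

theorem X_zero : X A B C 0 = 1 := by
  rw [X, zero_smul, NormedSpace.exp_zero, ← fromBlocks_one, toBlocks_fromBlocks₁₁]

theorem Y_zero : Y A B C 0 = 0 := by
  rw [Y, zero_smul, NormedSpace.exp_zero, ← fromBlocks_one, toBlocks_fromBlocks₂₁]

theorem W_zero : W A B C 0 = 0 := by simp [W, Y_zero]

theorem solution_zero : solution A B C 0 = 0 := by simp [solution, Y_zero]

theorem hasDerivAt_X (t : ℝ) :
    HasDerivAt (X A B C) (-(B * X A B C t) - A * Y A B C t) t := by
  have h := Matrix.hasDerivAt_iff.mp (hasDerivAt_exp_smul_const' (hamiltonian A B C) t)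
  rw [X, Y, ← toBlocks₁₁_hamiltonian_mul]
  exact Matrix.hasDerivAt_iff.mpr fun i j => h (.inl i) (.inl j)

theorem hasDerivAt_Y (t : ℝ) :
    HasDerivAt (Y A B C) (C * X A B C t + Bᵀ * Y A B C t) t := by
  have h := Matrix.hasDerivAt_iff.mp (hasDerivAt_exp_smul_const' (hamiltonian A B C) t)
  rw [X, Y, ← toBlocks₂₁_hamiltonian_mul]
  exact Matrix.hasDerivAt_iff.mpr fun i j => h (.inr i) (.inl j)

theorem hasDerivAt_W (t : ℝ) :
    HasDerivAt (W A B C)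
      ((X A B C t)ᵀ * C * X A B C t - (Y A B C t)ᵀ * Aᵀ * Y A B C t) t := by
  refine ((hasDerivAt_X A B C t).matrix_transpose.mul (hasDerivAt_Y A B C t)).congr_deriv ?_
  simp only [transpose_sub, transpose_neg, transpose_mul]
  noncomm_ring

theorem hasDerivAt_solution {t : ℝ} (hdet : IsUnit (X A B C t).det) :
    HasDerivAt (solution A B C) (rhs A B C (solution A B C t)) t := by
  refine ((hasDerivAt_Y A B C t).mul ((hasDerivAt_X A B C t).matrix_inv hdet)).congr_deriv ?_
  have hXX : X A B C t * (X A B C t)⁻¹ = 1 := mul_nonsing_inv _ hdet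
  simp only [rhs, solution, Matrix.mul_sub, Matrix.sub_mul, Matrix.add_mul, Matrix.mul_neg,
    Matrix.neg_mul, Matrix.mul_assoc, hXX, Matrix.mul_one]
  noncomm_ring

theorem ODE_solution_unique_Icc {Γ₁ Γ₂ : ℝ → Matrix n n ℝ} {a b : ℝ}
    (h₁ : ∀ t ∈ Icc a b, HasDerivWithinAt Γ₁ (rhs A B C (Γ₁ t)) (Icc a b) t)
    (h₂ : ∀ t ∈ Icc a b, HasDerivWithinAt Γ₂ (rhs A B C (Γ₂ t)) (Icc a b) t)
    (ha : Γ₁ a = Γ₂ a) : EqOn Γ₁ Γ₂ (Icc a b) :=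
  ODE_solution_unique_Icc_of_contDiff (by unfold rhs; fun_prop) h₁ h₂ ha

variable {A C}

theorem isSymm_W (hA : A.IsSymm) (hC : C.IsSymm) (t : ℝ) : (W A B C t).IsSymm := by
  have hderiv (s : ℝ) : HasDerivAt (fun τ => (W A B C τ)ᵀ - W A B C τ) 0 s := by
    refine ((hasDerivAt_W A B C s).matrix_transpose.sub (hasDerivAt_W A B C s)).congr_deriv ?_
    simp only [transpose_sub, transpose_mul, transpose_transpose, hA.eq, hC.eq, Matrix.mul_assoc,
      sub_self]
  have h := is_const_of_deriv_eq_zero (fun s => (hderiv s).differentiableAt)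
    (fun s => (hderiv s).deriv) t 0
  rwa [W_zero, transpose_zero, sub_zero, sub_eq_zero] at h

theorem antitone_dotProduct_W_mulVec (hA : A.PosSemidef) (hC : (-C).PosSemidef) (v : n → ℝ) :
    Antitone fun t => v ⬝ᵥ (W A B C t *ᵥ v) := by
  have hW (t : ℝ) := (hasDerivAt_W A B C t).dotProduct_mulVec v v
  refine antitone_of_deriv_nonpos (fun t => (hW t).differentiableAt) fun t => ?_
  have hcongr (P Q : Matrix n n ℝ) :
      v ⬝ᵥ ((Pᵀ * Q * P) *ᵥ v) = (P *ᵥ v) ⬝ᵥ (Q *ᵥ (P *ᵥ v)) := by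
    rw [← mulVec_mulVec, ← mulVec_mulVec, dotProduct_mulVec, vecMul_transpose]
  have hCx := hC.dotProduct_mulVec_nonneg (X A B C t *ᵥ v)
  have hAy := hA.transpose.dotProduct_mulVec_nonneg (Y A B C t *ᵥ v)
  simp only [star_trivial, neg_mulVec, dotProduct_neg] at hCx hAy
  rw [(hW t).deriv, sub_mulVec, dotProduct_sub, hcongr, hcongr]
  linarith

theorem dotProduct_W_mulVec_neg (hA : A.PosSemidef) (hC : (-C).PosDef) {t : ℝ} (ht : 0 < t)
    {v : n → ℝ} (hv : v ≠ 0) : v ⬝ᵥ (W A B C t *ᵥ v) < 0 := by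
  have hd := ((hasDerivAt_W A B C 0).dotProduct_mulVec v v).hasDerivWithinAt (s := Icc 0 t)
  have hCv := hC.dotProduct_mulVec_pos hv
  simp only [X_zero, Y_zero, transpose_one, transpose_zero, Matrix.one_mul, Matrix.mul_one,
    Matrix.zero_mul, Matrix.mul_zero, sub_zero] at hd
  simp only [star_trivial, neg_mulVec, dotProduct_neg, neg_pos] at hCv
  simpa [W_zero] using lt_of_antitoneOn_of_hasDerivWithinAt_neg
    ((antitone_dotProduct_W_mulVec B hA hC.posSemidef v).antitoneOn _) hd hCv ht

theorem posDef_neg_W (hA : A.PosSemidef) (hC : (-C).PosDef) {t : ℝ} (ht : 0 < t) :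
    (-W A B C t).PosDef := by
  have hAs : A.IsSymm := isHermitian_iff_isSymm.mp hA.isHermitian
  have hCs : C.IsSymm := by simpa using (isHermitian_iff_isSymm.mp hC.isHermitian).neg
  refine PosDef.of_dotProduct_mulVec_pos ?_ fun x hx => ?_
  · exact isHermitian_iff_isSymm.mpr (isSymm_W B hAs hCs t).neg
  · simpa [neg_mulVec] using dotProduct_W_mulVec_neg B hA hC ht hx

theorem isUnit_det_X (hA : A.PosSemidef) (hC : (-C).PosDef) {t : ℝ} (ht : 0 ≤ t) :
    IsUnit (X A B C t).det := by
  rcases ht.eq_or_lt with rfl | ht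
  · simp [X_zero]
  · have hW := (isUnit_iff_isUnit_det _).mp (posDef_neg_W B hA hC ht).isUnit.neg
    rw [neg_neg, W, det_mul, det_transpose] at hW
    exact isUnit_of_mul_isUnit_left hW

theorem hasDerivWithinAt_solution (hA : A.PosSemidef) (hC : (-C).PosDef) {s : Set ℝ} {t : ℝ}
    (ht : 0 ≤ t) : HasDerivWithinAt (solution A B C) (rhs A B C (solution A B C t)) s t :=
  (hasDerivAt_solution A B C (isUnit_det_X B hA hC ht)).hasDerivWithinAt

theorem solution_eq_transpose_inv_mul_W_mul_inv {t : ℝ} (hdet : IsUnit (X A B C t).det) :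
    solution A B C t = ((X A B C t)⁻¹)ᵀ * W A B C t * (X A B C t)⁻¹ := by
  rw [W, transpose_nonsing_inv, ← Matrix.mul_assoc,
    nonsing_inv_mul _ (by rwa [det_transpose]), Matrix.one_mul, solution]

theorem posDef_neg_solution (hA : A.PosSemidef) (hC : (-C).PosDef) {t : ℝ} (ht : 0 < t) :
    (-solution A B C t).PosDef := by
  have hdet := isUnit_det_X B hA hC ht.le
  rw [solution_eq_transpose_inv_mul_W_mul_inv B hdet, ← conjTranspose_eq_transpose_of_trivial,
    ← Matrix.neg_mul, ← Matrix.mul_neg]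
  exact (posDef_neg_W B hA hC ht).conjTranspose_mul_mul_same <| mulVec_injective_iff_isUnit.mpr <|
    (isUnit_iff_isUnit_det _).mpr (isUnit_nonsing_inv_det _ hdet)

end Riccati

end LinftyOpNorm

namespace Stmt3

theorem riccati_global_existence_general
    (γ : ℝ) (hγ : 1 < γ)
    (KX : Matrix (Fin 2) (Fin 2) ℝ) (SX : Matrix (Fin 2) (Fin 4) ℝ)
    (Λ₁ : Matrix (Fin 4) (Fin 2) ℝ)
    (hΛpos : (Λ₁ᵀ * Λ₁).PosDef)
    (T : ℝ) :
    ∃ Γ : ℝ → Matrix (Fin 2) (Fin 2) ℝ,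
      (Γ 0 = 0 ∧ ∀ τ ∈ Set.Icc (0 : ℝ) T, ∀ i j, HasDerivWithinAt (fun s => Γ s i j)
        ((Γ τ * Z₂ SX * Γ τ + (Z₁ γ KX SX Λ₁)ᵀ * Γ τ + Γ τ * Z₁ γ KX SX Λ₁
          + Z₀ γ Λ₁) i j) (Set.Icc (0 : ℝ) T) τ) ∧
      (∀ Γ' : ℝ → Matrix (Fin 2) (Fin 2) ℝ,
        (Γ' 0 = 0 ∧ ∀ τ ∈ Set.Icc (0 : ℝ) T, ∀ i j, HasDerivWithinAt (fun s => Γ' s i j)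
          ((Γ' τ * Z₂ SX * Γ' τ + (Z₁ γ KX SX Λ₁)ᵀ * Γ' τ + Γ' τ * Z₁ γ KX SX Λ₁
            + Z₀ γ Λ₁) i j) (Set.Icc (0 : ℝ) T) τ) →
        Set.EqOn Γ Γ' (Set.Icc (0 : ℝ) T)) ∧
      (∀ τ ∈ Set.Ioc (0 : ℝ) T, (Γ τ).IsSymm ∧
        ∀ x : Fin 2 → ℝ, x ≠ 0 → x ⬝ᵥ (Γ τ *ᵥ x) < 0) := by
  have hA : (Z₂ SX).PosSemidef := by
    simpa [Z₂, conjTranspose_eq_transpose_of_trivial] using posSemidef_self_mul_conjTranspose SX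
  have hC : (-Z₀ γ Λ₁).PosDef := by
    rw [Z₀, ← neg_smul, ← neg_div, neg_sub]
    exact hΛpos.smul (div_pos (by linarith) (by positivity))
  set B := Z₁ γ KX SX Λ₁
  have hΓ (τ : ℝ) (hτ : τ ∈ Icc (0 : ℝ) T) :=
    Riccati.hasDerivWithinAt_solution (s := Icc 0 T) B hA hC hτ.1
  refine ⟨Riccati.solution (Z₂ SX) B (Z₀ γ Λ₁),
    ⟨Riccati.solution_zero _ _ _, fun τ hτ => Matrix.hasDerivWithinAt_iff.mp (hΓ τ hτ)⟩,
    fun Γ' ⟨hΓ'₀, hΓ'⟩ => ?_, fun τ hτ => ?_⟩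
  · refine Riccati.ODE_solution_unique_Icc _ _ _ hΓ
      (fun τ hτ => Matrix.hasDerivWithinAt_iff.mpr (hΓ' τ hτ)) ?_
    rw [hΓ'₀]
    exact Riccati.solution_zero _ _ _
  · obtain ⟨hsymm, hpos⟩ := posDef_iff_dotProduct_mulVec.mp
      (Riccati.posDef_neg_solution B hA hC hτ.1)
    refine ⟨by simpa using (isHermitian_iff_isSymm.mp hsymm).neg, fun x hx => ?_⟩
    simpa only [star_trivial, neg_mulVec, dotProduct_neg, neg_pos] using hpos hx

/-- global-existence part of Proposition 4: if `γ > 1`, `Σ_XΣ_Xᵀ` is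
positive definite and `Λ₁ᵀΛ₁` is positive definite, then for every `T > 0` the
Hermitian matrix Riccati equation `Γ₂' = Γ₂Z₂Γ₂ + Z₁ᵀΓ₂ + Γ₂Z₁ + Z₀`, `Γ₂(0) = 0`,
has a unique solution on `[0,T]`, which is symmetric and negative definite on `(0,T]`. -/
theorem riccati_global_existence
    (γ : ℝ) (hγ : 1 < γ)
    (KX : Matrix (Fin 2) (Fin 2) ℝ) (SX : Matrix (Fin 2) (Fin 4) ℝ)
    (Λ₁ : Matrix (Fin 4) (Fin 2) ℝ)
    (hZ₂pos : (SX * SXᵀ).PosDef) (hΛpos : (Λ₁ᵀ * Λ₁).PosDef)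
    (T : ℝ) (hT : 0 < T) :
    ∃ Γ : ℝ → Matrix (Fin 2) (Fin 2) ℝ,
      (Γ 0 = 0 ∧ ∀ τ ∈ Set.Icc (0 : ℝ) T, ∀ i j, HasDerivWithinAt (fun s => Γ s i j)
        ((Γ τ * Z₂ SX * Γ τ + (Z₁ γ KX SX Λ₁)ᵀ * Γ τ + Γ τ * Z₁ γ KX SX Λ₁
          + Z₀ γ Λ₁) i j) (Set.Icc (0 : ℝ) T) τ) ∧
      (∀ Γ' : ℝ → Matrix (Fin 2) (Fin 2) ℝ,
        (Γ' 0 = 0 ∧ ∀ τ ∈ Set.Icc (0 : ℝ) T, ∀ i j, HasDerivWithinAt (fun s => Γ' s i j)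
          ((Γ' τ * Z₂ SX * Γ' τ + (Z₁ γ KX SX Λ₁)ᵀ * Γ' τ + Γ' τ * Z₁ γ KX SX Λ₁
            + Z₀ γ Λ₁) i j) (Set.Icc (0 : ℝ) T) τ) →
        Set.EqOn Γ Γ' (Set.Icc (0 : ℝ) T)) ∧
      (∀ τ ∈ Set.Ioc (0 : ℝ) T, (Γ τ).IsSymm ∧
        ∀ x : Fin 2 → ℝ, x ≠ 0 → x ⬝ᵥ (Γ τ *ᵥ x) < 0) :=
  riccati_global_existence_general γ hγ KX SX Λ₁ hΛpos T

end Stmt3
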